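/- Let L1 and L2 be two tree languages over a graded alphabet Σ, and let a and b be two distinct symbols in Σ_0 such that L2 ⊆ T(Σ∖{a}), i.e. the symbol a appears in no tree of L2. Then L1^{*_a} ·_b L2 = (L1 ·_b L2)^{*_a}. -/

import Mathlib

/-!
Substituting `P` for `a` and then `L2` for `b` in a tree `t` gives the same trees as substituting
`L2` for `b` first and then `P ·_b L2` for `a`: the first substitution leaves the `b`-leaves of `t`
alone, and the second finds no `a`-leaves inside the trees of `L2`. Taking the union over `t ∈ L1`
gives `(L1 ·_a P) ·_b L2 = (L1 ·_b L2) ·_a (P ·_b L2)`, so `L1^{n,a} ·_b L2 = (L1 ·_b L2)^{n,a}`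
by induction on `n`, and the theorem follows by taking the union over `n`.
-/

attribute [local instance] Classical.propDecidable

/-- Trees over a graded alphabet: symbols `α` with arity function `ar`. -/
inductive GTree (α : Type) (ar : α → ℕ) : Type
  | node (f : α) (children : Fin (ar f) → GTree α ar) : GTree α ar

namespace GTree

variable {α : Type} {ar : α → ℕ}

/-- The `c`-product of a tree with a tree language. -/
def cprod (c : α) : GTree α ar → Set (GTree α ar) → Set (GTree α ar)
  | node f ch, L =>
    if f = c then L
    else { s | ∃ ch' : Fin (ar f) → GTree α ar,
            s = node f ch' ∧ ∀ i, ch' i ∈ cprod c (ch i) L }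

/-- The `c`-product of two tree languages. -/
def lprod (c : α) (L L' : Set (GTree α ar)) : Set (GTree α ar) :=
  ⋃ t ∈ L, cprod c t L'

/-- The single-node tree `c`, for `c` of rank 0. -/
def leaf (c : α) (hc : ar c = 0) : GTree α ar :=
  node c (fun i => (i.cast hc).elim0)

/-- The iterated `c`-product `L^{n,c}`. -/
def iterProd (c : α) (hc : ar c = 0) (L : Set (GTree α ar)) : ℕ → Set (GTree α ar)
  | 0 => {leaf c hc}
  | n + 1 => iterProd c hc L n ∪ lprod c L (iterProd c hc L n)

/-- The `c`-closure `L^{*_c}`. -/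
def closure (c : α) (hc : ar c = 0) (L : Set (GTree α ar)) : Set (GTree α ar) :=
  ⋃ n, iterProd c hc L n

/-- The symbol `a` occurs (appears) in the tree. -/
def occurs (a : α) : GTree α ar → Prop
  | node f ch => f = a ∨ ∃ i, occurs a (ch i)

end GTree

open Set

namespace GTree

variable {α : Type} {ar : α → ℕ}

theorem cprod_node_of_eq {c f : α} (h : f = c) (ch : Fin (ar f) → GTree α ar)
    (L : Set (GTree α ar)) : cprod c (node f ch) L = L := by
  rw [cprod, if_pos h]

theorem cprod_node_of_ne {c f : α} (h : f ≠ c) (ch : Fin (ar f) → GTree α ar)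
    (L : Set (GTree α ar)) :
    cprod c (node f ch) L = node f '' univ.pi fun i => cprod c (ch i) L := by
  ext s
  simp only [cprod, if_neg h, mem_ofPred_eq, mem_image, mem_univ_pi]
  exact exists_congr fun ch' => by rw [and_comm, eq_comm]

theorem cprod_of_not_occurs {c : α} :
    ∀ {t : GTree α ar}, ¬ occurs c t → ∀ L, cprod c t L = {t}
  | node f ch, h, L => by
    simp only [occurs, not_or, not_exists] at h
    simp only [cprod_node_of_ne h.1, cprod_of_not_occurs (h.2 _), univ_pi_singleton,
      image_singleton]

theorem not_occurs_node_of_ar_eq_zero {c f : α} (hfc : f ≠ c) (hf : ar f = 0)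
    (ch : Fin (ar f) → GTree α ar) : ¬ occurs c (node f ch) := by
  simp only [occurs, hfc, false_or, not_exists]
  exact fun i => (i.cast hf).elim0

theorem lprod_singleton (c : α) (t : GTree α ar) (L : Set (GTree α ar)) :
    lprod c {t} L = cprod c t L :=
  biUnion_singleton t _

theorem lprod_union (c : α) (S T L : Set (GTree α ar)) :
    lprod c (S ∪ T) L = lprod c S L ∪ lprod c T L :=
  biUnion_union S T _

theorem lprod_iUnion (c : α) {ι : Sort*} (S : ι → Set (GTree α ar)) (L : Set (GTree α ar)) :
    lprod c (⋃ i, S i) L = ⋃ i, lprod c (S i) L :=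
  biUnion_iUnion S _

theorem lprod_of_not_occurs {c : α} {L : Set (GTree α ar)} (h : ∀ t ∈ L, ¬ occurs c t)
    (L' : Set (GTree α ar)) : lprod c L L' = L := by
  rw [lprod, iUnion₂_congr fun t ht => cprod_of_not_occurs (h t ht) L', biUnion_of_singleton]

theorem lprod_image_node_pi {c f : α} (h : f ≠ c) (S : Fin (ar f) → Set (GTree α ar))
    (L : Set (GTree α ar)) :
    lprod c (node f '' univ.pi S) L = node f '' univ.pi fun i => lprod c (S i) L := by
  ext s
  rw [lprod, biUnion_image]
  simp only [cprod_node_of_ne h, lprod, mem_iUnion, mem_image, mem_univ_pi, exists_prop]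
  constructor
  · rintro ⟨t, ht, u, hu, rfl⟩
    exact ⟨u, fun i => ⟨t i, ht i, hu i⟩, rfl⟩
  · rintro ⟨u, hu, rfl⟩
    choose t ht hut using hu
    exact ⟨t, ht, u, hut, rfl⟩

section Swap

variable {a b : α} (ha : ar a = 0) (hb : ar b = 0) (hab : a ≠ b) {L2 : Set (GTree α ar)}
  (h2 : ∀ t ∈ L2, ¬ occurs a t)
include ha hb hab h2

theorem lprod_cprod_swap :
    ∀ (t : GTree α ar) (P : Set (GTree α ar)),
      lprod b (cprod a t P) L2 = lprod a (cprod b t L2) (lprod b P L2)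
  | node f ch, P => by
    by_cases hfa : f = a
    · subst hfa
      rw [cprod_node_of_eq rfl, cprod_of_not_occurs (not_occurs_node_of_ar_eq_zero hab ha ch),
        lprod_singleton, cprod_node_of_eq rfl]
    by_cases hfb : f = b
    · subst hfb
      rw [cprod_of_not_occurs (not_occurs_node_of_ar_eq_zero hab.symm hb ch), lprod_singleton,
        cprod_node_of_eq rfl, lprod_of_not_occurs h2]
    rw [cprod_node_of_ne hfa, cprod_node_of_ne hfb, lprod_image_node_pi hfb,
      lprod_image_node_pi hfa]
    simp only [lprod_cprod_swap (ch _) P]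

theorem lprod_lprod_swap (L P : Set (GTree α ar)) :
    lprod b (lprod a L P) L2 = lprod a (lprod b L L2) (lprod b P L2) := by
  change lprod b (⋃ t ∈ L, cprod a t P) L2 = lprod a (⋃ t ∈ L, cprod b t L2) (lprod b P L2)
  simp only [lprod_iUnion, lprod_cprod_swap ha hb hab h2]

theorem lprod_iterProd (L1 : Set (GTree α ar)) :
    ∀ n, lprod b (iterProd a ha L1 n) L2 = iterProd a ha (lprod b L1 L2) n
  | 0 => by
    rw [iterProd, iterProd, lprod_singleton, leaf,
      cprod_of_not_occurs (not_occurs_node_of_ar_eq_zero hab ha _)]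
  | n + 1 => by
    rw [iterProd, iterProd, lprod_union, lprod_lprod_swap ha hb hab h2,
      lprod_iterProd L1 n]

end Swap

end GTree

/-- if `a ≠ b` are rank-0 symbols and `a` appears in no tree of `L2`,
then `L1^{*_a} ·_b L2 = (L1 ·_b L2)^{*_a}`. -/
theorem closure_lprod {α : Type} {ar : α → ℕ} (a b : α)
    (ha : ar a = 0) (hb : ar b = 0) (hab : a ≠ b)
    (L1 L2 : Set (GTree α ar)) (h2 : ∀ t ∈ L2, ¬ GTree.occurs a t) :
    GTree.lprod b (GTree.closure a ha L1) L2 =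
      GTree.closure a ha (GTree.lprod b L1 L2) := by
  simp only [GTree.closure, GTree.lprod_iUnion, GTree.lprod_iterProd ha hb hab h2]
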